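/- If v is a mismatched vertex of a tree T, then every neighbor u of v is matched in T, and moreover u is matched in the component of T − v containing u. -/

import Mathlib

open scoped Classical

noncomputable def sadj {V : Type*} [Fintype V] [DecidableEq V]
    (G : SimpleGraph V) (σ : V → V → ℝ) : Matrix V V ℝ :=
  fun u v => if G.Adj u v then σ u v else 0

noncomputable def nullity {V : Type*} [Fintype V] [DecidableEq V]
    (A : Matrix V V ℝ) : ℕ :=
  Module.finrank ℝ (LinearMap.ker (Matrix.mulVecLin A))

def walkSign {V : Type*} (G : SimpleGraph V) (σ : V → V → ℝ)
    {u v : V} (w : G.Walk u v) : ℝ :=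
  (w.darts.map (fun d => σ d.toProd.1 d.toProd.2)).prod

def BalancedSG {V : Type*} (G : SimpleGraph V) (σ : V → V → ℝ) : Prop :=
  ∀ (u : V) (w : G.Walk u u), w.IsCycle → walkSign G σ w = 1

def IsMatchingF {V : Type*} (G : SimpleGraph V) (M : Finset (Sym2 V)) : Prop :=
  (∀ e ∈ M, e ∈ G.edgeSet) ∧
  ∀ e ∈ M, ∀ f ∈ M, e ≠ f → ∀ v : V, ¬(v ∈ e ∧ v ∈ f)

noncomputable def matchingNumber {V : Type*} (G : SimpleGraph V) : ℕ :=
  sSup {k | ∃ M : Finset (Sym2 V), IsMatchingF G M ∧ M.card = k}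

def MatchedIn {V : Type*} (G : SimpleGraph V) (u : V) : Prop :=
  ∀ M : Finset (Sym2 V), IsMatchingF G M → M.card = matchingNumber G → ∃ e ∈ M, u ∈ e

def MismatchedIn {V : Type*} (G : SimpleGraph V) (u : V) : Prop :=
  ∃ M : Finset (Sym2 V), IsMatchingF G M ∧ M.card = matchingNumber G ∧ ∀ e ∈ M, u ∉ e

/-!
Let `C` be the component of `T - v` containing `u`. Every edge leaving `C` ends at `v`, and
since `T` is a tree, `u` is the only neighbour of `v` in `C`.

A maximum matching `N` of `T` missing `v` splits into a matching inside `C` and one outside `C`.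
If a maximum matching of `C` missed `u`, putting it in place of the inner part of `N` and adding
the edge `uv` would beat `N`; so `u` is matched in `C`.

A maximum matching `M` of `T` missing `u` must cover `v` (else add `uv`), by an edge `vw` with
`w ∉ C`. Then `M` again splits along `C`, and its inner part misses `u`, so it is not maximum in
`C`; replacing it by a maximum matching of `C` would beat `M`.
-/

section Matching

variable {V : Type*} {G : SimpleGraph V} {M N : Finset (Sym2 V)}

lemma IsMatchingF.mono (hN : IsMatchingF G N) (h : M ⊆ N) : IsMatchingF G M :=
  ⟨fun e he => hN.1 e (h he), fun e he f hf => hN.2 e (h he) f (h hf)⟩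

lemma isMatchingF_empty : IsMatchingF G ∅ :=
  ⟨by simp, by simp⟩

lemma isMatchingF_singleton {a b : V} (h : G.Adj a b) : IsMatchingF G {s(a, b)} := by
  refine ⟨by simpa using h, ?_⟩
  simp

lemma IsMatchingF.union (hM : IsMatchingF G M) (hN : IsMatchingF G N)
    (hMN : ∀ e ∈ M, ∀ f ∈ N, ∀ x ∈ e, x ∉ f) : IsMatchingF G (M ∪ N) := by
  refine ⟨fun e he => (Finset.mem_union.mp he).elim (hM.1 e) (hN.1 e), ?_⟩
  intro e he f hf hef x ⟨hxe, hxf⟩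
  rcases Finset.mem_union.mp he with he | he <;> rcases Finset.mem_union.mp hf with hf | hf
  · exact hM.2 e he f hf hef x ⟨hxe, hxf⟩
  · exact hMN e he f hf x hxe hxf
  · exact hMN f hf e he x hxf hxe
  · exact hN.2 e he f hf hef x ⟨hxe, hxf⟩

lemma card_union_of_vertexDisjoint (hMN : ∀ e ∈ M, ∀ f ∈ N, ∀ x ∈ e, x ∉ f) :
    (M ∪ N).card = M.card + N.card := by
  refine Finset.card_union_of_disjoint (Finset.disjoint_left.mpr fun e heM heN => ?_)
  exact hMN e heM e heN _ (Sym2.out_fst_mem e) (Sym2.out_fst_mem e)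

variable [Finite V]

lemma bddAbove_matchingSizes (G : SimpleGraph V) :
    BddAbove {k | ∃ M : Finset (Sym2 V), IsMatchingF G M ∧ M.card = k} :=
  (Set.finite_range (Finset.card : Finset (Sym2 V) → ℕ)).bddAbove.mono <| by
    rintro _ ⟨M, -, rfl⟩
    exact ⟨M, rfl⟩

lemma exists_isMatchingF_card_eq_matchingNumber (G : SimpleGraph V) :
    ∃ M : Finset (Sym2 V), IsMatchingF G M ∧ M.card = matchingNumber G :=
  Nat.sSup_mem (s := {k | ∃ M : Finset (Sym2 V), IsMatchingF G M ∧ M.card = k})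
    ⟨0, ∅, isMatchingF_empty, rfl⟩ (bddAbove_matchingSizes G)

lemma IsMatchingF.card_le_matchingNumber (hM : IsMatchingF G M) : M.card ≤ matchingNumber G :=
  le_csSup (bddAbove_matchingSizes G) (by exact ⟨M, hM, rfl⟩)

lemma card_add_card_le_matchingNumber (hM : IsMatchingF G M) (hN : IsMatchingF G N)
    (hMN : ∀ e ∈ M, ∀ f ∈ N, ∀ x ∈ e, x ∉ f) : M.card + N.card ≤ matchingNumber G :=
  card_union_of_vertexDisjoint hMN ▸ (hM.union hN hMN).card_le_matchingNumber

lemma IsMatchingF.card_lt_matchingNumber_of_adj (hM : IsMatchingF G M)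
    {a b : V} (hab : G.Adj a b) (ha : ∀ e ∈ M, a ∉ e) (hb : ∀ e ∈ M, b ∉ e) :
    M.card < matchingNumber G := by
  have := card_add_card_le_matchingNumber hM (isMatchingF_singleton hab) <| by
    simp only [Finset.mem_singleton, forall_eq, Sym2.mem_iff, not_or]
    exact fun e he x hx => ⟨fun h => ha e he (h ▸ hx), fun h => hb e he (h ▸ hx)⟩
  simpa using this

end Matching

section Embedding

variable {V W : Type*} {G : SimpleGraph V} {H : SimpleGraph W} (φ : H ↪g G)

lemma SimpleGraph.Embedding.apply_mem_sym2Map_iff {e : Sym2 W} {w : W} :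
    φ w ∈ e.map φ ↔ w ∈ e := by
  simp [Sym2.mem_map, φ.injective.eq_iff]

lemma isMatchingF_image_iff {M : Finset (Sym2 W)} :
    IsMatchingF G (M.image (Sym2.map φ)) ↔ IsMatchingF H M := by
  have hinj : Function.Injective (Sym2.map φ) := Sym2.map.injective φ.injective
  simp only [IsMatchingF, Finset.forall_mem_image, φ.map_mem_edgeSet_iff, hinj.ne_iff]
  refine and_congr_right fun _ => forall₂_congr fun e _ => forall₂_congr fun f _ =>
    imp_congr_right fun _ => ⟨fun h w => ?_, fun h x hx => ?_⟩
  · simpa only [φ.apply_mem_sym2Map_iff] using h (φ w)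
  · obtain ⟨w, -, rfl⟩ := Sym2.mem_map.mp hx.1
    simp only [φ.apply_mem_sym2Map_iff] at hx
    exact h w hx

lemma exists_isMatchingF_image_eq {N : Finset (Sym2 V)} (hN : IsMatchingF G N)
    (hNφ : ∀ e ∈ N, e ∈ (Set.range φ).sym2) :
    ∃ M : Finset (Sym2 W), IsMatchingF H M ∧ M.image (Sym2.map φ) = N := by
  have hinj : Function.Injective (Sym2.map φ) := Sym2.map.injective φ.injective
  have hrange : (Set.range φ).sym2 = Set.range (Sym2.map φ) := by
    rw [← Set.image_univ, Set.sym2_image, Set.sym2_univ, Set.image_univ]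
  have himage : (N.preimage (Sym2.map φ) hinj.injOn).image (Sym2.map φ) = N := by
    rw [Finset.image_preimage, Finset.filter_true_of_mem fun e he => hrange ▸ hNφ e he]
  exact ⟨_, (isMatchingF_image_iff φ).mp (himage.symm ▸ hN), himage⟩

lemma image_subset_sym2_range {M : Finset (Sym2 W)} :
    ∀ e ∈ M.image (Sym2.map φ), e ∈ (Set.range φ).sym2 := by
  simp only [Finset.forall_mem_image, Sym2.forall]
  exact fun _ _ _ => ⟨⟨_, rfl⟩, ⟨_, rfl⟩⟩

variable {N : Finset (Sym2 V)}

lemma IsMatchingF.exists_pullback (hN : IsMatchingF G N) :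
    ∃ M : Finset (Sym2 W), IsMatchingF H M ∧
      M.card = (N.filter (· ∈ (Set.range φ).sym2)).card ∧ ∀ e ∈ M, e.map φ ∈ N := by
  obtain ⟨M, hM, hMN⟩ := exists_isMatchingF_image_eq φ (hN.mono (Finset.filter_subset _ _))
    fun e he => (Finset.mem_filter.mp he).2
  refine ⟨M, hM, ?_, fun e he => ?_⟩
  · rw [← hMN, Finset.card_image_of_injective _ (Sym2.map.injective φ.injective)]
  · exact Finset.filter_subset _ _ (hMN ▸ Finset.mem_image_of_mem _ he)

variable [Finite W]

lemma IsMatchingF.card_filter_sym2_range_le (hN : IsMatchingF G N) :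
    (N.filter (· ∈ (Set.range φ).sym2)).card ≤ matchingNumber H := by
  obtain ⟨M, hM, hcard, -⟩ := hN.exists_pullback φ
  exact hcard ▸ hM.card_le_matchingNumber

lemma IsMatchingF.card_filter_sym2_range_lt (hN : IsMatchingF G N) {u : W}
    (hu : MatchedIn H u) (hNu : ∀ e ∈ N, φ u ∉ e) :
    (N.filter (· ∈ (Set.range φ).sym2)).card < matchingNumber H := by
  obtain ⟨M, hM, hcard, hMN⟩ := hN.exists_pullback φ
  refine lt_of_le_of_ne (hcard ▸ hM.card_le_matchingNumber) fun h => ?_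
  obtain ⟨e, he, hue⟩ := hu M hM (hcard.trans h)
  exact hNu _ (hMN e he) (φ.apply_mem_sym2Map_iff.mpr hue)

end Embedding

section SplitAlongSet

variable {V : Type*} {G : SimpleGraph V} {S : Set V}

lemma mem_sym2_or_mem_compl_sym2 {v : V} {e : Sym2 V}
    (hS : ∀ a b, a ∈ S → G.Adj a b → b ≠ v → b ∈ S) (he : e ∈ G.edgeSet)
    (hve : v ∈ e → e ∈ Sᶜ.sym2) : e ∈ S.sym2 ∨ e ∈ Sᶜ.sym2 := by
  induction e using Sym2.ind with
  | _ a b =>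
    by_cases hv : v ∈ s(a, b)
    · exact .inr (hve hv)
    simp only [Sym2.mem_iff, not_or] at hv
    simp only [Set.mk_mem_sym2_iff, Set.mem_compl_iff]
    by_cases ha : a ∈ S
    · exact .inl ⟨ha, hS a b ha he (Ne.symm hv.2)⟩
    · exact .inr ⟨ha, fun hb => ha (hS b a hb he.symm (Ne.symm hv.1))⟩

lemma card_filter_sym2_add_card_filter_compl_sym2 {N : Finset (Sym2 V)}
    (hN : ∀ e ∈ N, e ∈ S.sym2 ∨ e ∈ Sᶜ.sym2) :
    (N.filter (· ∈ S.sym2)).card + (N.filter (· ∈ Sᶜ.sym2)).card = N.card := by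
  rw [← Finset.card_filter_add_card_filter_not (s := N) (· ∈ S.sym2)]
  congr 2
  refine Finset.filter_congr fun e he => ⟨fun hc hs => ?_, (hN e he).resolve_left⟩
  exact Set.mem_sym2_iff_subset.mp hc (Sym2.out_fst_mem e)
    (Set.mem_sym2_iff_subset.mp hs (Sym2.out_fst_mem e))

end SplitAlongSet

section Graft

variable {V W : Type*} {G : SimpleGraph V} {H : SimpleGraph W} (φ : H ↪g G)

noncomputable def graftMatching (M : Finset (Sym2 W)) (N : Finset (Sym2 V)) : Finset (Sym2 V) :=
  M.image (Sym2.map φ) ∪ N.filter (· ∈ (Set.range φ)ᶜ.sym2)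

variable {M : Finset (Sym2 W)} {N : Finset (Sym2 V)}

lemma vertexDisjoint_graftMatching :
    ∀ e ∈ M.image (Sym2.map φ), ∀ f ∈ N.filter (· ∈ (Set.range φ)ᶜ.sym2), ∀ x ∈ e, x ∉ f :=
  fun e he _ hf _ hxe hxf => Set.mem_sym2_iff_subset.mp (Finset.mem_filter.mp hf).2 hxf
    (Set.mem_sym2_iff_subset.mp (image_subset_sym2_range φ e he) hxe)

lemma IsMatchingF.graftMatching (hM : IsMatchingF H M) (hN : IsMatchingF G N) :
    IsMatchingF G (graftMatching φ M N) :=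
  ((isMatchingF_image_iff φ).mpr hM).union (hN.mono (Finset.filter_subset _ _))
    (vertexDisjoint_graftMatching φ)

lemma card_graftMatching :
    (graftMatching φ M N).card = M.card + (N.filter (· ∈ (Set.range φ)ᶜ.sym2)).card := by
  rw [graftMatching, card_union_of_vertexDisjoint (vertexDisjoint_graftMatching φ),
    Finset.card_image_of_injective _ (Sym2.map.injective φ.injective)]

lemma apply_notMem_of_mem_graftMatching {w : W} (hw : ∀ e ∈ M, w ∉ e) :
    ∀ e ∈ graftMatching φ M N, φ w ∉ e := by
  intro e he hwe
  rcases Finset.mem_union.mp he with he | he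
  · obtain ⟨e, he', rfl⟩ := Finset.mem_image.mp he
    exact hw e he' (φ.apply_mem_sym2Map_iff.mp hwe)
  · exact Set.mem_sym2_iff_subset.mp (Finset.mem_filter.mp he).2 hwe ⟨w, rfl⟩

lemma notMem_of_mem_graftMatching {x : V} (hx : x ∉ Set.range φ) (hxN : ∀ e ∈ N, x ∉ e) :
    ∀ e ∈ graftMatching φ M N, x ∉ e := by
  intro e he hxe
  rcases Finset.mem_union.mp he with he | he
  · exact hx (Set.mem_sym2_iff_subset.mp (image_subset_sym2_range φ e he) hxe)
  · exact hxN e (Finset.mem_filter.mp he).1 hxe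

end Graft

section Separation

variable {V W : Type*} [Finite V] [Finite W] {G : SimpleGraph V} {H : SimpleGraph W}
  (φ : H ↪g G) {v : V}

theorem matchedIn_of_adj_mismatchedIn (hv : v ∉ Set.range φ)
    (hclosed : ∀ a b, a ∈ Set.range φ → G.Adj a b → b ≠ v → b ∈ Set.range φ)
    (hmis : MismatchedIn G v) {u : W} (hadj : G.Adj (φ u) v) : MatchedIn H u := by
  intro M hM hMcard
  by_contra! hMu
  obtain ⟨N, hN, hNcard, hNv⟩ := hmis
  have hsplit := card_filter_sym2_add_card_filter_compl_sym2 fun e he =>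
    mem_sym2_or_mem_compl_sym2 hclosed (hN.1 e he) fun hve => absurd hve (hNv e he)
  have hinside := hN.card_filter_sym2_range_le φ
  have hgraft := (hM.graftMatching φ hN).card_lt_matchingNumber_of_adj hadj
    (apply_notMem_of_mem_graftMatching φ hMu) (notMem_of_mem_graftMatching φ hv hNv)
  rw [card_graftMatching] at hgraft
  omega

theorem matchedIn_apply_of_adj_mismatchedIn (hv : v ∉ Set.range φ)
    (hclosed : ∀ a b, a ∈ Set.range φ → G.Adj a b → b ≠ v → b ∈ Set.range φ) {u : W}
    (hunique : ∀ w, G.Adj v w → w ∈ Set.range φ → w = φ u)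
    (hmis : MismatchedIn G v) (hadj : G.Adj (φ u) v) : MatchedIn G (φ u) := by
  have hu := matchedIn_of_adj_mismatchedIn φ hv hclosed hmis hadj
  intro M hM hMcard
  by_contra! hMu
  obtain ⟨w, hvw, hwM⟩ : ∃ w, G.Adj v w ∧ s(v, w) ∈ M := by
    by_contra! hvM
    refine (hM.card_lt_matchingNumber_of_adj hadj hMu fun e he hve => ?_).ne hMcard
    obtain ⟨w, rfl⟩ := Sym2.mem_iff_exists.mp hve
    exact hvM w (hM.1 _ he) he
  have hw : w ∉ Set.range φ := fun hw => hMu _ hwM (hunique w hvw hw ▸ Sym2.mem_mk_right v w)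
  have hsplit := card_filter_sym2_add_card_filter_compl_sym2 fun e he =>
    mem_sym2_or_mem_compl_sym2 hclosed (hM.1 e he) fun hve => by
      obtain rfl : e = s(v, w) := by
        by_contra hne
        exact hM.2 e he _ hwM hne v ⟨hve, Sym2.mem_mk_left v w⟩
      exact Set.mk_mem_sym2_iff.mpr ⟨hv, hw⟩
  have hinside := hM.card_filter_sym2_range_lt φ hu hMu
  obtain ⟨X, hX, hXcard⟩ := exists_isMatchingF_card_eq_matchingNumber H
  have hgraft := (hX.graftMatching φ hM).card_le_matchingNumber
  rw [card_graftMatching] at hgraft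
  omega

end Separation

namespace SimpleGraph

variable {V : Type*} {G : SimpleGraph V}

lemma IsAcyclic.eq_of_adj_of_walk_avoiding (hG : G.IsAcyclic) {u v w : V} (huv : G.Adj u v)
    (hvw : G.Adj v w) (p : G.Walk w u) (hvp : v ∉ p.support) : w = u := by
  have hvp' : v ∉ p.bypass.support := fun h => hvp (p.support_bypass_subset_support h)
  have hpaths := (hG.subsingleton_path v u).elim ⟨.cons hvw p.bypass, p.bypass_isPath.cons hvp'⟩
    ⟨.cons huv.symm .nil, Walk.IsPath.nil.cons (by simpa using huv.ne.symm)⟩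
  have hw : w ∈ (Walk.cons hvw p.bypass).support := by simp
  rw [congrArg (fun q : G.Path v u => q.1.support) hpaths] at hw
  simpa [hvw.ne.symm] using hw

variable {s : Set V} (C : (G.induce s).ConnectedComponent)

abbrev ConnectedComponent.embeddingInduce : (G.induce s).induce C.supp ↪g G :=
  (Embedding.induce s).comp (Embedding.induce C.supp)

lemma ConnectedComponent.range_embeddingInduce_subset : Set.range C.embeddingInduce ⊆ s := by
  rintro _ ⟨x, rfl⟩
  exact x.1.2

lemma ConnectedComponent.mem_range_embeddingInduce_of_adj {a b : V}
    (ha : a ∈ Set.range C.embeddingInduce) (hab : G.Adj a b) (hb : b ∈ s) :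
    b ∈ Set.range C.embeddingInduce := by
  obtain ⟨x, rfl⟩ := ha
  refine ⟨⟨⟨b, hb⟩, ?_⟩, rfl⟩
  rw [ConnectedComponent.mem_supp_iff, ← (C.mem_supp_iff x.1).mp x.2]
  exact (connectedComponentMk_eq_of_adj (G := G.induce s) (v := x.1) (w := ⟨b, hb⟩) hab).symm

lemma IsAcyclic.eq_of_adj_of_mem_range_embeddingInduce (hG : G.IsAcyclic) {u v w : V}
    (huv : G.Adj u v) (hvw : G.Adj v w)
    (hw : w ∈ Set.range
      ((G.induce {x | x ≠ v}).connectedComponentMk ⟨u, huv.ne⟩).embeddingInduce) :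
    w = u := by
  obtain ⟨x, rfl⟩ := hw
  obtain ⟨p⟩ := ConnectedComponent.exact x.2
  have hvp : v ∉ (p.map (Embedding.induce {x : V | x ≠ v}).toHom).support := by
    simp only [Walk.support_map, List.mem_map, not_exists, not_and]
    exact fun y _ hy => y.2 hy
  exact hG.eq_of_adj_of_walk_avoiding huv hvw _ hvp

end SimpleGraph

theorem stmt13_general {V : Type*} [Fintype V]
    (G : SimpleGraph V) (hT : G.IsTree)
    (v u : V) (hmis : MismatchedIn G v) (hadj : G.Adj u v) :
    MatchedIn G u ∧
    MatchedIn
      ((G.induce {x | x ≠ v}).induce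
        (((G.induce {x | x ≠ v}).connectedComponentMk ⟨u, hadj.ne⟩).supp))
      ⟨⟨u, hadj.ne⟩, rfl⟩ := by
  set C := (G.induce {x | x ≠ v}).connectedComponentMk ⟨u, hadj.ne⟩
  have hv : v ∉ Set.range C.embeddingInduce := fun h => C.range_embeddingInduce_subset h rfl
  have hclosed : ∀ a b, a ∈ Set.range C.embeddingInduce → G.Adj a b → b ≠ v →
      b ∈ Set.range C.embeddingInduce :=
    fun _ _ => C.mem_range_embeddingInduce_of_adj
  have hunique : ∀ w, G.Adj v w → w ∈ Set.range C.embeddingInduce → w = u :=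
    fun _ hvw hw => hT.isAcyclic.eq_of_adj_of_mem_range_embeddingInduce hadj hvw hw
  exact ⟨matchedIn_apply_of_adj_mismatchedIn (u := ⟨⟨u, hadj.ne⟩, rfl⟩) C.embeddingInduce hv
      hclosed hunique hmis hadj,
    matchedIn_of_adj_mismatchedIn C.embeddingInduce hv hclosed hmis hadj⟩

/-- if v is mismatched in a tree T, then every neighbor u of v is matched
in T, and u is matched in the component of T − v containing u. -/
theorem stmt13 {V : Type*} [Fintype V] [DecidableEq V]
    (G : SimpleGraph V) (hT : G.IsTree)
    (v u : V) (hmis : MismatchedIn G v) (hadj : G.Adj u v) :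
    MatchedIn G u ∧
    MatchedIn
      ((G.induce {x | x ≠ v}).induce
        (((G.induce {x | x ≠ v}).connectedComponentMk ⟨u, hadj.ne⟩).supp))
      ⟨⟨u, hadj.ne⟩, rfl⟩ :=
  stmt13_general G hT v u hmis hadj
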